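/- Let r₁, r₂ be unit vectors in ℝ³ with ⟨r₁,r₂⟩ = cos α ≥ 0, and let μ = (δ_{r₁} + δ_{r₂})/2 be the uniform distribution on {r₁, r₂}. Then for all C ∈ [0,1], g(C,μ) = √((1 + C² + (1−C²)·cos α)/2). In particular, if r₁ and r₂ are orthogonal, g(C,μ) = √((1+C²)/2). -/

import Mathlib

/-!
Put `x = ⟪r₁, v⟫`, `y = ⟪r₂, v⟫` and `c = ⟪r₁, r₂⟫ ≥ 0`. The vectors `r₁ + r₂` and `r₁ - r₂` are
orthogonal, of squared lengths `2 + 2c ≥ 2 - 2c`, and pair with `v` to `x + y` and `x - y`; hence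
`x² + y² ≤ 1 + c` for every unit `v`. Concavity of the square root bounds the objective
`(√(C² + (1 - C²) x²) + √(C² + (1 - C²) y²)) / 2` by `√((1 + C² + (1 - C²) c) / 2)`, and the bisector
`v = (r₁ + r₂) / ‖r₁ + r₂‖`, where `x² = y² = (1 + c) / 2`, attains it.
-/

open MeasureTheory Real
open scoped ENNReal

noncomputable section

abbrev E3 := EuclideanSpace ℝ (Fin 3)

/-- The unit sphere S² in ℝ³. -/
def unitSphere : Set E3 := Metric.sphere (0 : E3) 1

/-- `g C μ` is the supremum over unit vectors `v` of `∫ √(C² + (1−C²)⟨r,v⟩²) dμ(r)`. -/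
def g (C : ℝ) (μ : Measure E3) : ℝ :=
  ⨆ v : unitSphere, ∫ r, Real.sqrt (C ^ 2 + (1 - C ^ 2) * (inner ℝ r (v : E3) : ℝ) ^ 2) ∂μ

open InnerProductSpace
open scoped RealInnerProductSpace

theorem sqrt_add_sqrt_div_two_le {a b : ℝ} (ha : 0 ≤ a) (hb : 0 ≤ b) :
    (√a + √b) / 2 ≤ √((a + b) / 2) := by
  refine le_sqrt_of_sq_le ?_
  nlinarith [sq_sqrt ha, sq_sqrt hb, sq_nonneg (√a - √b)]

section InnerProductSpace

variable {F : Type*} [NormedAddCommGroup F] [InnerProductSpace ℝ F]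

theorem inner_sq_add_inner_sq_le_of_inner_eq_zero {p q : F} (hpq : ⟪p, q⟫ = 0) (hqp : ‖q‖ ≤ ‖p‖)
    (v : F) : ⟪p, v⟫ ^ 2 + ⟪q, v⟫ ^ 2 ≤ ‖p‖ ^ 2 * ‖v‖ ^ 2 := by
  set a := ⟪p, v⟫
  set b := ⟪q, v⟫
  -- `a² + b²` is the pairing of `a • p + b • q` with `v`; apply Cauchy–Schwarz to it.
  have hpair : ⟪a • p + b • q, v⟫ = a ^ 2 + b ^ 2 := by
    simp only [inner_add_left, real_inner_smul_left]; ring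
  have hnorm : ‖a • p + b • q‖ ^ 2 ≤ (a ^ 2 + b ^ 2) * ‖p‖ ^ 2 := by
    rw [norm_add_sq_real, norm_smul, norm_smul, real_inner_smul_left, real_inner_smul_right, hpq,
      Real.norm_eq_abs, Real.norm_eq_abs, mul_pow, mul_pow, sq_abs, sq_abs]
    nlinarith [mul_le_mul_of_nonneg_left (pow_le_pow_left₀ (norm_nonneg q) hqp 2) (sq_nonneg b)]
  have hcs : (a ^ 2 + b ^ 2) ^ 2 ≤ (a ^ 2 + b ^ 2) * (‖p‖ ^ 2 * ‖v‖ ^ 2) := by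
    calc (a ^ 2 + b ^ 2) ^ 2 = ⟪a • p + b • q, v⟫ ^ 2 := by rw [hpair]
      _ ≤ ‖a • p + b • q‖ ^ 2 * ‖v‖ ^ 2 := by
        rw [← mul_pow]; exact sq_le_sq' (neg_le_of_abs_le (abs_real_inner_le_norm _ _))
          (real_inner_le_norm _ _)
      _ ≤ _ := by rw [← mul_assoc]; gcongr
  rcases (add_nonneg (sq_nonneg a) (sq_nonneg b)).eq_or_lt with h0 | hpos
  · rw [← h0]; positivity
  · nlinarith

theorem inner_sq_add_inner_sq_le_one_add_inner {r₁ r₂ : F} (h₁ : ‖r₁‖ = 1) (h₂ : ‖r₂‖ = 1)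
    (hc : 0 ≤ ⟪r₁, r₂⟫) {v : F} (hv : ‖v‖ = 1) :
    ⟪r₁, v⟫ ^ 2 + ⟪r₂, v⟫ ^ 2 ≤ 1 + ⟪r₁, r₂⟫ := by
  have hsum : ‖r₁ + r₂‖ ^ 2 = 2 + 2 * ⟪r₁, r₂⟫ := by
    rw [norm_add_sq_real, h₁, h₂]; ring
  have hdiff : ‖r₁ - r₂‖ ^ 2 = 2 - 2 * ⟪r₁, r₂⟫ := by
    rw [norm_sub_sq_real, h₁, h₂]; ring
  have horth : ⟪r₁ + r₂, r₁ - r₂⟫ = 0 := by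
    rw [inner_add_left, inner_sub_right, inner_sub_right, real_inner_self_eq_norm_sq,
      real_inner_self_eq_norm_sq, real_inner_comm r₁ r₂, h₁, h₂]; ring
  have hle : ‖r₁ - r₂‖ ≤ ‖r₁ + r₂‖ := by
    refine (pow_le_pow_iff_left₀ (norm_nonneg _) (norm_nonneg _) two_ne_zero).mp ?_
    rw [hsum, hdiff]; linarith
  have := inner_sq_add_inner_sq_le_of_inner_eq_zero horth hle v
  rw [hsum, hv, inner_add_left, inner_sub_left] at this
  nlinarith

theorem inner_sq_inv_norm_smul_add {r₁ r₂ : F} (h₁ : ‖r₁‖ = 1) (h₂ : ‖r₂‖ = 1) :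
    ⟪r₁, ‖r₁ + r₂‖⁻¹ • (r₁ + r₂)⟫ ^ 2 = (1 + ⟪r₁, r₂⟫) / 2 := by
  have hsum : ‖r₁ + r₂‖ ^ 2 = 2 * (1 + ⟪r₁, r₂⟫) := by
    rw [norm_add_sq_real, h₁, h₂]; ring
  rw [real_inner_smul_right, inner_add_right, real_inner_self_eq_norm_sq, h₁, mul_pow, inv_pow,
    hsum]
  -- when `1 + ⟪r₁, r₂⟫ = 0` both sides vanish, the left one because `0⁻¹ = 0`
  rcases eq_or_ne (1 + ⟪r₁, r₂⟫) 0 with h | h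
  · rw [one_pow, h]; simp
  · field_simp

theorem sqrt_add_sqrt_inner_sq_div_two_le {C : ℝ} (hC : C ^ 2 ≤ 1) {r₁ r₂ : F}
    (h₁ : ‖r₁‖ = 1) (h₂ : ‖r₂‖ = 1) (hc : 0 ≤ ⟪r₁, r₂⟫) {v : F} (hv : ‖v‖ = 1) :
    (√(C ^ 2 + (1 - C ^ 2) * ⟪r₁, v⟫ ^ 2) + √(C ^ 2 + (1 - C ^ 2) * ⟪r₂, v⟫ ^ 2)) / 2 ≤
      √((1 + C ^ 2 + (1 - C ^ 2) * ⟪r₁, r₂⟫) / 2) := by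
  have hC' : 0 ≤ 1 - C ^ 2 := sub_nonneg.mpr hC
  refine (sqrt_add_sqrt_div_two_le (by positivity) (by positivity)).trans (sqrt_le_sqrt ?_)
  have := mul_le_mul_of_nonneg_left (inner_sq_add_inner_sq_le_one_add_inner h₁ h₂ hc hv) hC'
  linarith

end InnerProductSpace

theorem integral_half_smul_dirac_add_dirac {α : Type*} [MeasurableSpace α]
    [MeasurableSingletonClass α] (f : α → ℝ) (a b : α) :
    ∫ x, f x ∂((2 : ℝ≥0∞)⁻¹ • (Measure.dirac a + Measure.dirac b)) = (f a + f b) / 2 := by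
  rw [integral_smul_measure, integral_add_measure (integrable_dirac enorm_lt_top)
    (integrable_dirac enorm_lt_top), integral_dirac, integral_dirac]
  simp [ENNReal.toReal_inv]; ring

theorem g_two_settings (r₁ r₂ : E3) (h₁ : ‖r₁‖ = 1) (h₂ : ‖r₂‖ = 1)
    (α : ℝ) (hα : (inner ℝ r₁ r₂ : ℝ) = Real.cos α) (hcos : 0 ≤ Real.cos α)
    (C : ℝ) (hC : C ∈ Set.Icc (0 : ℝ) 1) :
    g C ((2 : ℝ≥0∞)⁻¹ • (Measure.dirac r₁ + Measure.dirac r₂))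
        = Real.sqrt ((1 + C ^ 2 + (1 - C ^ 2) * Real.cos α) / 2) ∧
    ((inner ℝ r₁ r₂ : ℝ) = 0 →
      g C ((2 : ℝ≥0∞)⁻¹ • (Measure.dirac r₁ + Measure.dirac r₂))
        = Real.sqrt ((1 + C ^ 2) / 2)) := by
  have hC2 : C ^ 2 ≤ 1 := pow_le_one₀ hC.1 hC.2
  have hc : 0 ≤ ⟪r₁, r₂⟫ := hα ▸ hcos
  have hbound (v : unitSphere) :=
    sqrt_add_sqrt_inner_sq_div_two_le hC2 h₁ h₂ hc (mem_sphere_zero_iff_norm.mp v.2)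
  have hsum : r₁ + r₂ ≠ 0 := by
    intro h
    have := norm_add_sq_real r₁ r₂
    rw [h, h₁, h₂, norm_zero] at this
    linarith
  let v₀ : unitSphere := ⟨‖r₁ + r₂‖⁻¹ • (r₁ + r₂), mem_sphere_zero_iff_norm.mpr
    (norm_smul_inv_norm hsum)⟩
  have hv₀ : ⟪r₂, (v₀ : E3)⟫ ^ 2 = ⟪r₁, (v₀ : E3)⟫ ^ 2 := by
    simp only [v₀]
    rw [inner_sq_inv_norm_smul_add h₁ h₂, add_comm r₁, inner_sq_inv_norm_smul_add h₂ h₁,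
      real_inner_comm]
  have hg : g C ((2 : ℝ≥0∞)⁻¹ • (Measure.dirac r₁ + Measure.dirac r₂)) =
      √((1 + C ^ 2 + (1 - C ^ 2) * ⟪r₁, r₂⟫) / 2) := by
    have : Nonempty unitSphere := ⟨v₀⟩
    simp only [g, integral_half_smul_dirac_add_dirac]
    refine le_antisymm (ciSup_le hbound)
      (le_ciSup_of_le ⟨_, Set.forall_mem_range.mpr hbound⟩ v₀ ?_)
    rw [hv₀, inner_sq_inv_norm_smul_add h₁ h₂, ← two_mul, mul_div_cancel_left₀ _ two_ne_zero]
    exact sqrt_le_sqrt (le_of_eq (by ring))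
  refine ⟨hα ▸ hg, fun hperp => ?_⟩
  rw [hg, hperp, mul_zero, add_zero]
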